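/- Let I, K ⊆ J ⊆ Π. Then Φ \ (−Γ(I,J,K)) = (Φ⁺ \ Φ_I) ∪ (Φ⁻ \ Φ_J) ∪ (Φ_K⁻ \ Φ_I), and the three sets on the right-hand side are pairwise disjoint. -/

import Mathlib

variable {V : Type*} [NormedAddCommGroup V] [InnerProductSpace ℝ V]

/-- `Φ` is a finite reduced crystallographic root system spanning `V`. -/
structure IsRootSystem (Φ : Set V) : Prop where
  finite : Φ.Finite
  zero_not_mem : (0 : V) ∉ Φ
  span_top : Submodule.span ℝ Φ = ⊤
  reduced : ∀ α ∈ Φ, ∀ c : ℝ, c • α ∈ Φ → c = 1 ∨ c = -1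
  crystallographic : ∀ α ∈ Φ, ∀ β ∈ Φ,
    ∃ n : ℤ, 2 * (inner ℝ β α : ℝ) / (inner ℝ α α : ℝ) = (n : ℝ)
  reflect_mem : ∀ α ∈ Φ, ∀ β ∈ Φ,
    β - (2 * (inner ℝ β α : ℝ) / (inner ℝ α α : ℝ)) • α ∈ Φ

/-- `α` is a nonnegative linear combination of elements of `Δ`. -/
def IsNonnegComb (Δ : Set V) (α : V) : Prop :=
  ∃ c : V →₀ ℝ, (c.support : Set V) ⊆ Δ ∧ (∀ v, 0 ≤ c v) ∧ α = c.sum fun v r => r • v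

/-- `Δ` is a base (set of simple roots) of the root system `Φ`. -/
structure IsBase (Φ Δ : Set V) : Prop where
  subset : Δ ⊆ Φ
  indep : LinearIndependent ℝ (Subtype.val : Δ → V)
  pos_or_neg : ∀ α ∈ Φ, IsNonnegComb Δ α ∨ IsNonnegComb Δ (-α)

/-- The set of positive roots with respect to the base `Δ`. -/
def posRoots (Φ Δ : Set V) : Set V := {α ∈ Φ | IsNonnegComb Δ α}

/-- The set of negative roots with respect to the base `Δ`. -/
def negRoots (Φ Δ : Set V) : Set V := {α ∈ Φ | IsNonnegComb Δ (-α)}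

/-- `Φ_A := Φ ∩ span A`. -/
def rootsIn (Φ A : Set V) : Set V := Φ ∩ (Submodule.span ℝ A : Set V)

/-- `Φ_A⁺`. -/
def posRootsIn (Φ Δ A : Set V) : Set V := rootsIn Φ A ∩ posRoots Φ Δ

/-- `Φ_A⁻`. -/
def negRootsIn (Φ Δ A : Set V) : Set V := rootsIn Φ A ∩ negRoots Φ Δ

/-- `Γ` is a closed subset of `Φ`. -/
def IsClosedSubset (Φ Γ : Set V) : Prop := ∀ α ∈ Γ, ∀ β ∈ Γ, α + β ∈ Φ → α + β ∈ Γ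

/-- `X` and `Y` are orthogonal sets of vectors. -/
def OrthogonalSets (X Y : Set V) : Prop := ∀ α ∈ X, ∀ β ∈ Y, (inner ℝ α β : ℝ) = 0



/-! Negation preserves each `Φ_A` and swaps `Φ⁺` and `Φ⁻`, so `−Γ(I,J,K) = Φ_I ∪ (Φ_J⁻ \ Φ_K)`.
Since `Φ` is the disjoint union of `Φ⁺` and `Φ⁻` and `Φ_I ⊆ Φ_J`, the identity is then set
algebra; disjointness of the last two pieces uses `Φ_K ⊆ Φ_J`. -/

open scoped Pointwise

namespace IsNonnegComb

lemma eq_zero_of_neg {Δ : Set V} (hΔ : LinearIndependent ℝ (Subtype.val : Δ → V)) {α : V}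
    (hα : IsNonnegComb Δ α) (hnα : IsNonnegComb Δ (-α)) : α = 0 := by
  classical
  obtain ⟨c, hcΔ, hc0, rfl⟩ := hα
  obtain ⟨d, hdΔ, hd0, hd⟩ := hnα
  have hsupp : c + d ∈ Finsupp.supported ℝ ℝ Δ := fun v hv =>
    (Finset.mem_union.mp (Finsupp.support_add hv)).elim (@hcΔ v) (@hdΔ v)
  have hcomb : Finsupp.linearCombination ℝ id (c + d) = 0 := by
    rw [map_add, Finsupp.linearCombination_apply, Finsupp.linearCombination_apply]
    simp [← hd]
  have hcd : c + d = 0 :=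
    linearIndepOn_iff.mp (linearIndependent_subtype_iff.mp hΔ) _ hsupp hcomb
  have hc : c = 0 := by
    ext v
    have hv := DFunLike.congr_fun hcd v
    simp only [Finsupp.coe_add, Pi.add_apply, Finsupp.coe_zero, Pi.zero_apply] at hv ⊢
    linarith [hc0 v, hd0 v]
  simp [hc]

end IsNonnegComb

namespace IsRootSystem

variable {Φ : Set V}

lemma neg_mem (hΦ : IsRootSystem Φ) {α : V} (hα : α ∈ Φ) : -α ∈ Φ := by
  have hαα : (inner ℝ α α : ℝ) ≠ 0 :=
    inner_self_ne_zero.mpr fun h => hΦ.zero_not_mem (h ▸ hα)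
  have h := hΦ.reflect_mem α hα α hα
  rwa [mul_div_assoc, div_self hαα, mul_one, two_smul, sub_add_cancel_left] at h

lemma neg_mem_iff (hΦ : IsRootSystem Φ) {α : V} : -α ∈ Φ ↔ α ∈ Φ :=
  ⟨fun h => neg_neg α ▸ hΦ.neg_mem h, hΦ.neg_mem⟩

lemma neg_rootsIn (hΦ : IsRootSystem Φ) (A : Set V) : -rootsIn Φ A = rootsIn Φ A := by
  ext α
  simp only [Set.mem_neg, rootsIn, Set.mem_inter_iff, hΦ.neg_mem_iff, SetLike.mem_coe,
    Submodule.neg_mem_iff]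

lemma neg_posRoots (hΦ : IsRootSystem Φ) (Δ : Set V) : -posRoots Φ Δ = negRoots Φ Δ := by
  ext α
  simp only [Set.mem_neg, posRoots, negRoots, Set.mem_ofPred_eq, hΦ.neg_mem_iff]

lemma neg_posRootsIn (hΦ : IsRootSystem Φ) (Δ A : Set V) :
    -posRootsIn Φ Δ A = negRootsIn Φ Δ A := by
  rw [posRootsIn, Set.inter_neg, hΦ.neg_rootsIn, hΦ.neg_posRoots, negRootsIn]

end IsRootSystem

namespace IsBase

variable {Φ Δ : Set V}

lemma posRoots_union_negRoots (hΔ : IsBase Φ Δ) : posRoots Φ Δ ∪ negRoots Φ Δ = Φ := by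
  ext α
  simp only [posRoots, negRoots, Set.mem_union, Set.mem_ofPred_eq, ← and_or_left]
  exact and_iff_left_of_imp (hΔ.pos_or_neg α)

lemma disjoint_posRoots_negRoots (hΔ : IsBase Φ Δ) (h0 : (0 : V) ∉ Φ) :
    Disjoint (posRoots Φ Δ) (negRoots Φ Δ) :=
  Set.disjoint_left.mpr fun _ ⟨hα, hpos⟩ ⟨_, hneg⟩ =>
    h0 (IsNonnegComb.eq_zero_of_neg hΔ.indep hpos hneg ▸ hα)

end IsBase

lemma rootsIn_mono (Φ : Set V) {A B : Set V} (h : A ⊆ B) : rootsIn Φ A ⊆ rootsIn Φ B :=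
  Set.inter_subset_inter_right _ (Submodule.span_mono h)

theorem statement2_general (Φ Δ : Set V) (hΦ : IsRootSystem Φ) (hΔ : IsBase Φ Δ)
    (I J K : Set V) (hIJ : I ⊆ J) (hKJ : K ⊆ J) :
    Φ \ ((fun α => -α) '' (rootsIn Φ I ∪ (posRootsIn Φ Δ J \ rootsIn Φ K))) =
      (posRoots Φ Δ \ rootsIn Φ I) ∪ (negRoots Φ Δ \ rootsIn Φ J) ∪
        (negRootsIn Φ Δ K \ rootsIn Φ I) ∧
    Disjoint (posRoots Φ Δ \ rootsIn Φ I) (negRoots Φ Δ \ rootsIn Φ J) ∧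
    Disjoint (posRoots Φ Δ \ rootsIn Φ I) (negRootsIn Φ Δ K \ rootsIn Φ I) ∧
    Disjoint (negRoots Φ Δ \ rootsIn Φ J) (negRootsIn Φ Δ K \ rootsIn Φ I) := by
  have hneg : (fun α => -α) '' (rootsIn Φ I ∪ (posRootsIn Φ Δ J \ rootsIn Φ K)) =
      rootsIn Φ I ∪ (negRootsIn Φ Δ J \ rootsIn Φ K) := by
    simp only [Set.image_union, Set.image_sdiff neg_injective, Set.image_neg_eq_neg,
      hΦ.neg_rootsIn, hΦ.neg_posRootsIn]
  have hΦ_eq := hΔ.posRoots_union_negRoots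
  have hdisj := hΔ.disjoint_posRoots_negRoots hΦ.zero_not_mem
  have hIJ_roots := rootsIn_mono Φ hIJ
  have hKJ_roots := rootsIn_mono Φ hKJ
  refine ⟨?_, ?_, ?_, ?_⟩
  · rw [hneg]
    ext α
    have hα_cases : α ∈ Φ ↔ α ∈ posRoots Φ Δ ∨ α ∈ negRoots Φ Δ := by
      rw [← Set.mem_union, hΦ_eq]
    have hα_excl : α ∈ posRoots Φ Δ → α ∉ negRoots Φ Δ := fun h => Set.disjoint_left.mp hdisj h
    have hα_IJ : α ∈ rootsIn Φ I → α ∈ rootsIn Φ J := @hIJ_roots α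
    simp only [negRootsIn, Set.mem_sdiff, Set.mem_union, Set.mem_inter_iff]
    tauto
  · exact hdisj.mono Set.sdiff_subset Set.sdiff_subset
  · exact hdisj.mono Set.sdiff_subset (Set.sdiff_subset.trans Set.inter_subset_right)
  · exact Set.disjoint_left.mpr fun α hJ hK => hJ.2 (hKJ_roots hK.1.1)

/-- For `I, K ⊆ J ⊆ Π`,
`Φ \ (−Γ(I,J,K)) = (Φ⁺ \ Φ_I) ∪ (Φ⁻ \ Φ_J) ∪ (Φ_K⁻ \ Φ_I)`,
and the three sets on the right-hand side are pairwise disjoint. -/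
theorem statement2 (Φ Δ : Set V) (hΦ : IsRootSystem Φ) (hΔ : IsBase Φ Δ)
    (I J K : Set V) (hJΔ : J ⊆ Δ) (hIJ : I ⊆ J) (hKJ : K ⊆ J) :
    Φ \ ((fun α => -α) '' (rootsIn Φ I ∪ (posRootsIn Φ Δ J \ rootsIn Φ K))) =
      (posRoots Φ Δ \ rootsIn Φ I) ∪ (negRoots Φ Δ \ rootsIn Φ J) ∪
        (negRootsIn Φ Δ K \ rootsIn Φ I) ∧
    Disjoint (posRoots Φ Δ \ rootsIn Φ I) (negRoots Φ Δ \ rootsIn Φ J) ∧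
    Disjoint (posRoots Φ Δ \ rootsIn Φ I) (negRootsIn Φ Δ K \ rootsIn Φ I) ∧
    Disjoint (negRoots Φ Δ \ rootsIn Φ J) (negRootsIn Φ Δ K \ rootsIn Φ I) :=
  statement2_general Φ Δ hΦ hΔ I J K hIJ hKJ
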